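/- arXiv:0904.4131 — 2 statements merged into one kernel-verified Lean document; each statement's English description precedes it below -/
import Mathlib

section
/- Coercivity and existence of a minimizer for Version 1: under the standing assumptions on f and ρ̄ (in particular k ≤ ρ̄ ≤ K with 0 < k < K), the cost functional C⁽¹⁾ : ℝ^{N+1} → ℝ satisfies C⁽¹⁾(x) → ∞ as ‖x‖_∞ → ∞; consequently C⁽¹⁾ attains a global minimum on the affine hyperplane Ξ = {x ∈ ℝ^{N+1} : ∑ₙ xₙ = X₀}. -/
open Real Filter Finset

/-- `Fi f x = F(x) = ∫₀ˣ f(y) dy`. -/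
noncomputable def Fi (f : ℝ → ℝ) (x : ℝ) : ℝ := ∫ y in (0:ℝ)..x, f y

/-- `Ft f x = F̃(x) = ∫₀ˣ y f(y) dy`. -/
noncomputable def Ft (f : ℝ → ℝ) (x : ℝ) : ℝ := ∫ y in (0:ℝ)..x, y * f y

/-- `Gf f Finv = G = F̃ ∘ F⁻¹`. -/
noncomputable def Gf (f Finv : ℝ → ℝ) (x : ℝ) : ℝ := Ft f (Finv x)

/-- `ab τ ρ x = ā(x) = exp(−τ ρ̄(x))`. -/
noncomputable def ab (τ : ℝ) (ρ : ℝ → ℝ) (x : ℝ) : ℝ := Real.exp (-(τ * ρ x))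

/-- Version 1 dynamics: `E₀ = 0`, `E_{n+1} = ā(Eₙ + xₙ)·(Eₙ + xₙ)`. -/
noncomputable def Ev (τ : ℝ) (ρ : ℝ → ℝ) (x : ℕ → ℝ) : ℕ → ℝ
  | 0 => 0
  | n + 1 => ab τ ρ (Ev τ ρ x n + x n) * (Ev τ ρ x n + x n)

/-- Version 1 cost functional `C⁽¹⁾`. -/
noncomputable def C1 (f Finv : ℝ → ℝ) (τ : ℝ) (ρ : ℝ → ℝ) (N : ℕ) (x : ℕ → ℝ) : ℝ :=
  ∑ n ∈ Finset.range (N + 1), (Gf f Finv (Ev τ ρ x n + x n) - Gf f Finv (Ev τ ρ x n))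

/-!
`G = F̃ ∘ F⁻¹` has derivative `F⁻¹`, which is increasing and onto; hence `G` is convex, vanishes and
is minimal at `0`, and grows at least like `|s| - c`. Convexity and `G 0 = 0` turn
`ā ≤ e^{-τk} < 1` into `G(E_{n+1}) ≤ e^{-τk} G(Eₙ + xₙ)`, so the telescoping sum `C⁽¹⁾` dominates
`(1 - e^{-τk}) ∑ₙ G(Eₙ + xₙ)`, which bounds `G(Eₙ + xₙ)` and `G(Eₙ)`, hence `|xₙ|`: `C⁽¹⁾` grows
linearly in `‖x‖_∞`. A continuous function with this growth attains its minimum on the closed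
hyperplane `Ξ`.
-/

open Set

namespace ConvexOn

variable {S : Set ℝ} {f : ℝ → ℝ} {x y f' : ℝ}

lemma mul_sub_le_sub_of_hasDerivAt (hfc : ConvexOn ℝ S f) (hx : x ∈ S) (hy : y ∈ S)
    (hf' : HasDerivAt f f' x) : f' * (y - x) ≤ f y - f x := by
  rcases lt_trichotomy x y with hxy | rfl | hyx
  · have h := hfc.le_slope_of_hasDerivAt hx hy hxy hf'
    rw [slope_def_field, le_div_iff₀ (sub_pos.2 hxy)] at h
    exact h
  · simp
  · have h := hfc.slope_le_of_hasDerivAt hy hx hyx hf'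
    rw [slope_def_field, div_le_iff₀ (sub_pos.2 hyx)] at h
    linarith

lemma map_mul_le_mul (hfc : ConvexOn ℝ S f) (h0S : 0 ∈ S) (h0 : f 0 ≤ 0) (hx : x ∈ S) {a : ℝ}
    (ha₀ : 0 ≤ a) (ha₁ : a ≤ 1) : f (a * x) ≤ a * f x := by
  have h := hfc.2 hx h0S ha₀ (sub_nonneg.2 ha₁) (by ring)
  simp only [smul_eq_mul, mul_zero, add_zero] at h
  nlinarith

lemma exists_abs_sub_le_of_surjective_deriv {g : ℝ → ℝ} (hfc : ConvexOn ℝ univ f)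
    (hf' : ∀ x, HasDerivAt f (g x) x) (hg : Function.Surjective g) :
    ∃ c, ∀ x, |x| - c ≤ f x := by
  obtain ⟨a, ha⟩ := hg (-1)
  obtain ⟨b, hb⟩ := hg 1
  refine ⟨max (b - f b) (-a - f a), fun x => ?_⟩
  have hleft := hfc.mul_sub_le_sub_of_hasDerivAt (mem_univ a) (mem_univ x) (hf' a)
  have hright := hfc.mul_sub_le_sub_of_hasDerivAt (mem_univ b) (mem_univ x) (hf' b)
  rw [ha] at hleft
  rw [hb] at hright
  have := le_max_left (b - f b) (-a - f a)
  have := le_max_right (b - f b) (-a - f a)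
  rcases abs_cases x with ⟨hx, -⟩ | ⟨hx, -⟩ <;> linarith

end ConvexOn

lemma mul_sum_le_sum_sub {g e : ℕ → ℝ} {l : ℝ} (hl : 0 ≤ l) (hg : ∀ n, 0 ≤ g n) (he₀ : e 0 = 0)
    (he : ∀ n, e (n + 1) ≤ l * g n) (N : ℕ) :
    (1 - l) * ∑ n ∈ range (N + 1), g n ≤ ∑ n ∈ range (N + 1), (g n - e n) := by
  have hshift : ∑ n ∈ range (N + 1), e n ≤ l * ∑ n ∈ range (N + 1), g n :=
    calc ∑ n ∈ range (N + 1), e n = ∑ n ∈ range N, e (n + 1) := by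
          rw [sum_range_succ', he₀, add_zero]
      _ ≤ ∑ n ∈ range N, l * g n := sum_le_sum fun n _ => he n
      _ ≤ l * ∑ n ∈ range (N + 1), g n := by
          rw [← mul_sum, sum_range_succ]
          exact mul_le_mul_of_nonneg_left (le_add_of_nonneg_right (hg N)) hl
  rw [sum_sub_distrib]
  linarith

lemma tendsto_cocompact_atTop_of_mul_abs_sub_le {ι : Type*} [Fintype ι] [Nonempty ι]
    {Φ : (ι → ℝ) → ℝ} {c d : ℝ} (hc : 0 < c) (h : ∀ v i, c * |v i| - d ≤ Φ v) :
    Tendsto Φ (cocompact (ι → ℝ)) atTop := by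
  refine tendsto_atTop_mono (fun v => ?_) (tendsto_atTop_add_const_right _ (-d)
    (tendsto_norm_cocompact_atTop.const_mul_atTop hc))
  have hnn : 0 ≤ (Φ v + d) / c := by
    have hi := h v (Classical.arbitrary ι)
    have := mul_nonneg hc.le (abs_nonneg (v (Classical.arbitrary ι)))
    exact div_nonneg (by linarith) hc.le
  have hv : ‖v‖ ≤ (Φ v + d) / c := (pi_norm_le_iff_of_nonneg hnn).2 fun i => by
    rw [Real.norm_eq_abs, le_div_iff₀ hc]
    linarith [h v i]
  rw [le_div_iff₀ hc] at hv
  linarith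

lemma exists_forall_le_of_sum_eq {N : ℕ} {C : (ℕ → ℝ) → ℝ} (hC : Continuous C)
    (hloc : ∀ x y : ℕ → ℝ, (∀ i ≤ N, x i = y i) → C x = C y) {c d : ℝ} (hc : 0 < c)
    (hlow : ∀ x : ℕ → ℝ, ∀ j ≤ N, c * |x j| - d ≤ C x) (X₀ : ℝ) :
    ∃ ξ : ℕ → ℝ, (∑ n ∈ range (N + 1), ξ n = X₀) ∧
      ∀ y : ℕ → ℝ, (∑ n ∈ range (N + 1), y n = X₀) → C ξ ≤ C y := by
  let extend : (Fin (N + 1) → ℝ) → ℕ → ℝ := fun v n => v (Fin.ofNat (N + 1) n)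
  have hΦ : Continuous (C ∘ extend) := hC.comp (continuous_pi fun n => continuous_apply _)
  have hcoer : Tendsto (C ∘ extend) (cocompact _) atTop :=
    tendsto_cocompact_atTop_of_mul_abs_sub_le hc fun v i => by
      have h := hlow (extend v) i (Nat.lt_succ_iff.1 i.isLt)
      rwa [show extend v i = v i by simp [extend]] at h
  have hsum (y : ℕ → ℝ) : ∑ i : Fin (N + 1), y i = ∑ n ∈ range (N + 1), y n :=
    Fin.sum_univ_eq_sum_range y (N + 1)
  obtain ⟨w, hw, hmin⟩ := hΦ.continuousOn.exists_isMinOn' (s := {v | ∑ i, v i = X₀})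
    (isClosed_eq (continuous_finsetSum _ fun i _ => continuous_apply i) continuous_const)
    (x₀ := Pi.single 0 X₀) (by simp) ((hcoer.eventually_ge_atTop _).filter_mono inf_le_left)
  refine ⟨extend w, by simpa [extend, ← hsum] using hw, fun y hy => ?_⟩
  have hyext : C (extend fun i => y i) = C y :=
    hloc _ _ fun n hn => by simp [extend, Nat.mod_eq_of_lt (Nat.lt_succ_of_le hn)]
  exact (isMinOn_iff.1 hmin _ ((hsum y).trans hy)).trans_eq hyext

section Potential

variable {f Finv : ℝ → ℝ}

lemma hasDerivAt_Fi (hf : Continuous f) (x : ℝ) : HasDerivAt (Fi f) (f x) x :=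
  intervalIntegral.integral_hasDerivAt_right (hf.intervalIntegrable _ _)
    (hf.stronglyMeasurableAtFilter _ _) hf.continuousAt

lemma hasDerivAt_Ft (hf : Continuous f) (x : ℝ) : HasDerivAt (Ft f) (x * f x) x :=
  have hyf : Continuous fun y => y * f y := continuous_id.mul hf
  intervalIntegral.integral_hasDerivAt_right (hyf.intervalIntegrable _ _)
    (hyf.stronglyMeasurableAtFilter _ _) hyf.continuousAt

lemma Fi_strictMono (hf : Continuous f) (hfpos : ∀ x, 0 < f x) : StrictMono (Fi f) :=
  strictMono_of_deriv_pos fun x => (hasDerivAt_Fi hf x).deriv ▸ hfpos x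

lemma Finv_monotone (hf : Continuous f) (hfpos : ∀ x, 0 < f x)
    (hFinv₁ : ∀ x, Fi f (Finv x) = x) : Monotone Finv := fun x y hxy =>
  (Fi_strictMono hf hfpos).le_iff_le.1 (by rwa [hFinv₁, hFinv₁])

lemma Finv_zero (hFinv₂ : ∀ x, Finv (Fi f x) = x) : Finv 0 = 0 := by
  simpa [Fi] using hFinv₂ 0

lemma Gf_zero (hFinv₂ : ∀ x, Finv (Fi f x) = x) : Gf f Finv 0 = 0 := by
  simp [Gf, Finv_zero hFinv₂, Ft]

lemma hasDerivAt_Gf (hf : Continuous f) (hfpos : ∀ x, 0 < f x)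
    (hFinv₁ : ∀ x, Fi f (Finv x) = x) (hFinv₂ : ∀ x, Finv (Fi f x) = x) (x : ℝ) :
    HasDerivAt (Gf f Finv) (Finv x) x := by
  have hcont : Continuous Finv :=
    (Finv_monotone hf hfpos hFinv₁).continuous_of_surjective fun y => ⟨Fi f y, hFinv₂ y⟩
  have hFinv' : HasDerivAt Finv (f (Finv x))⁻¹ x :=
    (hasDerivAt_Fi hf (Finv x)).of_local_left_inverse hcont.continuousAt (hfpos _).ne'
      (Eventually.of_forall hFinv₁)
  have h := (hasDerivAt_Ft hf (Finv x)).comp x hFinv'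
  rwa [mul_assoc, mul_inv_cancel₀ (hfpos _).ne', mul_one] at h

lemma convexOn_Gf (hf : Continuous f) (hfpos : ∀ x, 0 < f x)
    (hFinv₁ : ∀ x, Fi f (Finv x) = x) (hFinv₂ : ∀ x, Finv (Fi f x) = x) :
    ConvexOn ℝ univ (Gf f Finv) := by
  have hG := hasDerivAt_Gf hf hfpos hFinv₁ hFinv₂
  refine Monotone.convexOn_univ_of_deriv (fun x => (hG x).differentiableAt) ?_
  rw [funext fun x => (hG x).deriv]
  exact Finv_monotone hf hfpos hFinv₁

end Potential

section Dynamics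

variable {f Finv : ℝ → ℝ} {τ k : ℝ} {ρ : ℝ → ℝ}

lemma Ev_congr {x y : ℕ → ℝ} {n : ℕ} (h : ∀ i < n, x i = y i) : Ev τ ρ x n = Ev τ ρ y n := by
  induction n with
  | zero => rfl
  | succ n ih =>
    simp only [Ev, ih fun i hi => h i (Nat.lt_succ_of_lt hi), h n n.lt_succ_self]

lemma C1_congr {N : ℕ} {x y : ℕ → ℝ} (h : ∀ i ≤ N, x i = y i) :
    C1 f Finv τ ρ N x = C1 f Finv τ ρ N y := by
  refine Finset.sum_congr rfl fun n hn => ?_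
  have hn : n ≤ N := Nat.lt_succ_iff.1 (Finset.mem_range.1 hn)
  rw [Ev_congr fun i hi => h i (hi.le.trans hn), h n hn]

lemma continuous_Ev (hρ : Continuous ρ) (n : ℕ) : Continuous fun x : ℕ → ℝ => Ev τ ρ x n := by
  induction n with
  | zero => exact continuous_const
  | succ n ih =>
    have hS : Continuous fun x : ℕ → ℝ => Ev τ ρ x n + x n := ih.add (continuous_apply n)
    exact (Real.continuous_exp.comp (continuous_const.mul (hρ.comp hS)).neg).mul hS

lemma continuous_C1 (hG : Continuous (Gf f Finv)) (hρ : Continuous ρ) (N : ℕ) :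
    Continuous (C1 f Finv τ ρ N) :=
  continuous_finsetSum _ fun n _ =>
    (hG.comp ((continuous_Ev hρ n).add (continuous_apply n))).sub (hG.comp (continuous_Ev hρ n))

lemma ab_le_exp (hτ : 0 ≤ τ) (hρk : ∀ x, k ≤ ρ x) (x : ℝ) : ab τ ρ x ≤ exp (-(τ * k)) :=
  exp_le_exp.2 (neg_le_neg (mul_le_mul_of_nonneg_left (hρk x) hτ))

lemma Gf_Ev_succ_le (hG : ConvexOn ℝ univ (Gf f Finv)) (hG0 : Gf f Finv 0 = 0)
    (hGnn : ∀ s, 0 ≤ Gf f Finv s) (hτ : 0 ≤ τ) (hk : 0 ≤ k) (hρk : ∀ x, k ≤ ρ x)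
    (x : ℕ → ℝ) (n : ℕ) :
    Gf f Finv (Ev τ ρ x (n + 1)) ≤ exp (-(τ * k)) * Gf f Finv (Ev τ ρ x n + x n) := by
  set s := Ev τ ρ x n + x n
  have hab := ab_le_exp hτ hρk s
  have hlam : exp (-(τ * k)) ≤ 1 := exp_le_one_iff.2 (by nlinarith)
  calc Gf f Finv (ab τ ρ s * s) ≤ ab τ ρ s * Gf f Finv s :=
        hG.map_mul_le_mul (mem_univ 0) hG0.le (mem_univ s) (exp_pos _).le (hab.trans hlam)
    _ ≤ exp (-(τ * k)) * Gf f Finv s := mul_le_mul_of_nonneg_right hab (hGnn s)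

lemma exists_mul_abs_sub_le_C1 (hG : ConvexOn ℝ univ (Gf f Finv)) (hG0 : Gf f Finv 0 = 0)
    (hGnn : ∀ s, 0 ≤ Gf f Finv s) (hGgrowth : ∃ c, ∀ s, |s| - c ≤ Gf f Finv s)
    (hτ : 0 < τ) (hk : 0 < k) (hρk : ∀ x, k ≤ ρ x) (N : ℕ) :
    ∃ c > 0, ∃ d, ∀ x : ℕ → ℝ, ∀ j ≤ N, c * |x j| - d ≤ C1 f Finv τ ρ N x := by
  obtain ⟨c, hc⟩ := hGgrowth
  set l := exp (-(τ * k))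
  have hl : l < 1 := exp_lt_one_iff.2 (by nlinarith)
  refine ⟨(1 - l) / 2, by linarith, (1 - l) * c, fun x j hj => ?_⟩
  set total := ∑ n ∈ range (N + 1), Gf f Finv (Ev τ ρ x n + x n)
  have hstep := Gf_Ev_succ_le hG hG0 hGnn hτ.le hk.le hρk x
  have hC : (1 - l) * total ≤ C1 f Finv τ ρ N x :=
    mul_sum_le_sum_sub (exp_pos _).le (fun _ => hGnn _) (by simp [Ev, hG0]) hstep N
  have hle_total : ∀ i ≤ N, Gf f Finv (Ev τ ρ x i + x i) ≤ total := fun i hi =>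
    single_le_sum (f := fun n => Gf f Finv (Ev τ ρ x n + x n)) (fun n _ => hGnn _)
      (mem_range.2 (Nat.lt_succ_of_le hi))
  have hE : Gf f Finv (Ev τ ρ x j) ≤ total := by
    cases j with
    | zero => simpa [Ev, hG0] using sum_nonneg fun n _ => hGnn (Ev τ ρ x n + x n)
    | succ i =>
      calc Gf f Finv (Ev τ ρ x (i + 1)) ≤ l * Gf f Finv (Ev τ ρ x i + x i) := hstep i
        _ ≤ Gf f Finv (Ev τ ρ x i + x i) := mul_le_of_le_one_left (hGnn _) hl.le
        _ ≤ total := hle_total i (by omega)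
  have hx : |x j| ≤ |Ev τ ρ x j + x j| + |Ev τ ρ x j| := by
    simpa using abs_sub (Ev τ ρ x j + x j) (Ev τ ρ x j)
  have hxtotal : |x j| ≤ 2 * total + 2 * c := by
    linarith [hc (Ev τ ρ x j + x j), hc (Ev τ ρ x j), hle_total j hj]
  have := mul_le_mul_of_nonneg_left hxtotal (by linarith : (0 : ℝ) ≤ (1 - l) / 2)
  linarith

end Dynamics

theorem C1_coercive_and_min_exists_general
    (f Finv : ℝ → ℝ) (hf : Continuous f) (hfpos : ∀ x, 0 < f x)
    (hFinv₁ : ∀ x, Fi f (Finv x) = x) (hFinv₂ : ∀ x, Finv (Fi f x) = x)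
    (τ : ℝ) (hτ : 0 < τ) (ρ : ℝ → ℝ) (hρ : ContDiff ℝ 1 ρ)
    (k K : ℝ) (hk : 0 < k) (hρbd : ∀ x, k ≤ ρ x ∧ ρ x ≤ K)
    (N : ℕ) (X₀ : ℝ) :
    (∀ M : ℝ, ∃ R : ℝ, ∀ x : ℕ → ℝ, (∃ n ≤ N, R ≤ |x n|) → M ≤ C1 f Finv τ ρ N x) ∧
    (∃ ξ : ℕ → ℝ, (∑ n ∈ Finset.range (N + 1), ξ n = X₀) ∧
      ∀ y : ℕ → ℝ, (∑ n ∈ Finset.range (N + 1), y n = X₀) →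
        C1 f Finv τ ρ N ξ ≤ C1 f Finv τ ρ N y) := by
  have hGd := hasDerivAt_Gf hf hfpos hFinv₁ hFinv₂
  have hG := convexOn_Gf hf hfpos hFinv₁ hFinv₂
  have hG0 := Gf_zero hFinv₂
  have hGnn : ∀ s, 0 ≤ Gf f Finv s := fun s => by
    simpa [hG0, Finv_zero hFinv₂] using
      hG.mul_sub_le_sub_of_hasDerivAt (mem_univ 0) (mem_univ s) (hGd 0)
  obtain ⟨c, hc, d, hlow⟩ := exists_mul_abs_sub_le_C1 hG hG0 hGnn
    (hG.exists_abs_sub_le_of_surjective_deriv hGd fun y => ⟨Fi f y, hFinv₂ y⟩) hτ hk (fun x => (hρbd x).1) N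
  refine ⟨fun M => ⟨(M + d) / c, fun x ⟨n, hn, hR⟩ => ?_⟩, ?_⟩
  · rw [div_le_iff₀ hc] at hR
    linarith [hlow x n hn]
  · have hGc : Continuous (Gf f Finv) := continuous_iff_continuousAt.2 fun s => (hGd s).continuousAt
    exact exists_forall_le_of_sum_eq (continuous_C1 hGc hρ.continuous N) (fun _ _ => C1_congr) hc
      hlow X₀

/-- Coercivity of `C⁽¹⁾` (`C⁽¹⁾(x) → ∞` as `‖x‖_∞ → ∞`) and existence of a
global minimizer on the hyperplane `Ξ = {x : ∑ₙ xₙ = X₀}`. -/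
theorem C1_coercive_and_min_exists
    (f Finv : ℝ → ℝ) (hf : Continuous f) (hfpos : ∀ x, 0 < f x)
    (htop : Tendsto (Fi f) atTop atTop) (hbot : Tendsto (Fi f) atBot atBot)
    (hFinv₁ : ∀ x, Fi f (Finv x) = x) (hFinv₂ : ∀ x, Finv (Fi f x) = x)
    (τ : ℝ) (hτ : 0 < τ) (ρ : ℝ → ℝ) (hρ : ContDiff ℝ 1 ρ)
    (k K : ℝ) (hk : 0 < k) (hkK : k < K) (hρbd : ∀ x, k ≤ ρ x ∧ ρ x ≤ K)
    (N : ℕ) (hN : 1 ≤ N) (X₀ : ℝ) (hX₀ : 0 < X₀) :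
    (∀ M : ℝ, ∃ R : ℝ, ∀ x : ℕ → ℝ, (∃ n ≤ N, R ≤ |x n|) → M ≤ C1 f Finv τ ρ N x) ∧
    (∃ ξ : ℕ → ℝ, (∑ n ∈ Finset.range (N + 1), ξ n = X₀) ∧
      ∀ y : ℕ → ℝ, (∑ n ∈ Finset.range (N + 1), y n = X₀) →
        C1 f Finv τ ρ N ξ ≤ C1 f Finv τ ρ N y) :=
  C1_coercive_and_min_exists_general f Finv hf hfpos hFinv₁ hFinv₂ τ hτ ρ hρ k K hk hρbd N X₀
end

section
/- Positivity of the final order in Version 1: suppose ā(x)(1 − τρ̄′(x)x) < 1 for all x ∈ ℝ and that x₀ > 0 satisfies F⁻¹(X₀ − Nx₀(1 − ā(x₀))) = h₁(x₀) (equivalently ĥ₁(x₀) = 0). Then the final order x_N := X₀ − x₀ − (N − 1)·x₀·(1 − ā(x₀)) is strictly positive. -/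
open Real Filter

/-- The function `h₁` of the generalized AFS model, Version 1. -/
noncomputable def h1 (Finv : ℝ → ℝ) (τ : ℝ) (ρ : ℝ → ℝ) (x : ℝ) : ℝ :=
  (Finv x - ab τ ρ x * (1 - τ * deriv ρ x * x) * Finv (ab τ ρ x * x)) /
    (1 - ab τ ρ x * (1 - τ * deriv ρ x * x))

/-!
Write `a = ā(x₀)` and `b = ā(x₀)(1 − τρ̄′(x₀)x₀)`. Since `(x ā(x))′ = ā(x)(1 − τρ̄′(x)x) < 1` and
`x ā(x)` vanishes at `0`, we get `a x₀ < x₀`, hence `F⁻¹(a x₀) < F⁻¹(x₀)`. As `0 < 1 − b`,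
`h₁(x₀) = F⁻¹(a x₀) + (F⁻¹(x₀) − F⁻¹(a x₀)) / (1 − b) > F⁻¹(a x₀)`, so applying `F` to the
equation for `x₀` gives `a x₀ < X₀ − N x₀(1 − a)`, that is, `x_N = X₀ − N x₀(1 − a) − a x₀ > 0`.
-/

lemma strictMono_Fi {f : ℝ → ℝ} (hf : Continuous f) (hfpos : ∀ x, 0 < f x) :
    StrictMono (Fi f) :=
  strictMono_of_deriv_pos fun x => (hf.deriv_integral f 0 x).symm ▸ hfpos x

lemma StrictMono.of_leftInverse {α β : Type*} [Preorder α] [LinearOrder β] {g : β → α}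
    {h : α → β} (hg : StrictMono g) (hgh : ∀ x, g (h x) = x) : StrictMono h :=
  fun s t hst => by rwa [← hg.lt_iff_lt, hgh, hgh]

lemma lt_self_of_hasDerivAt_lt_one {G G' : ℝ → ℝ} (hG : ∀ x, HasDerivAt G (G' x) x)
    (hG' : ∀ x, G' x < 1) (hG0 : G 0 = 0) {x : ℝ} (hx : 0 < x) : G x < x := by
  have hmono : StrictMono fun y => y - G y :=
    strictMono_of_deriv_pos fun y => by
      rw [((hasDerivAt_id' y).fun_sub (hG y)).deriv]
      linarith [hG' y]
  simpa [hG0] using hmono hx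

lemma lt_sub_mul_div_one_sub {u v b : ℝ} (huv : u < v) (hb : b < 1) :
    u < (v - b * u) / (1 - b) := by
  rw [lt_div_iff₀ (sub_pos.mpr hb)]
  linarith

section

variable {τ : ℝ} {ρ : ℝ → ℝ}

lemma hasDerivAt_mul_ab {x : ℝ} (hρ : DifferentiableAt ℝ ρ x) :
    HasDerivAt (fun y => y * ab τ ρ y) (ab τ ρ x * (1 - τ * deriv ρ x * x)) x := by
  refine ((hasDerivAt_id' x).mul (hρ.hasDerivAt.const_mul τ).fun_neg.exp).congr_deriv ?_
  unfold ab
  ring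

lemma ab_mul_lt_self (hρ : Differentiable ℝ ρ)
    (hlt : ∀ x, ab τ ρ x * (1 - τ * deriv ρ x * x) < 1) {x : ℝ} (hx : 0 < x) :
    ab τ ρ x * x < x := by
  have h := lt_self_of_hasDerivAt_lt_one (fun y => hasDerivAt_mul_ab (hρ y)) hlt
    (zero_mul _) hx
  rwa [mul_comm] at h

lemma Finv_ab_mul_lt_h1 {Finv : ℝ → ℝ} (hFinv : StrictMono Finv) (hρ : Differentiable ℝ ρ)
    (hlt : ∀ x, ab τ ρ x * (1 - τ * deriv ρ x * x) < 1) {x : ℝ} (hx : 0 < x) :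
    Finv (ab τ ρ x * x) < h1 Finv τ ρ x :=
  lt_sub_mul_div_one_sub (hFinv (ab_mul_lt_self hρ hlt hx)) (hlt x)

end

theorem final_order_positive_v1_general
    (f Finv : ℝ → ℝ) (hf : Continuous f) (hfpos : ∀ x, 0 < f x)
    (hFinv₁ : ∀ x, Fi f (Finv x) = x)
    (τ : ℝ) (ρ : ℝ → ℝ) (hρ : ContDiff ℝ 1 ρ)
    (hlt : ∀ x, ab τ ρ x * (1 - τ * deriv ρ x * x) < 1)
    (N : ℕ) (X₀ : ℝ)
    (x₀ : ℝ) (hx₀pos : 0 < x₀)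
    (hx₀ : Finv (X₀ - (N : ℝ) * (x₀ * (1 - ab τ ρ x₀))) = h1 Finv τ ρ x₀) :
    0 < X₀ - x₀ - ((N : ℝ) - 1) * (x₀ * (1 - ab τ ρ x₀)) := by
  have hF := strictMono_Fi hf hfpos
  have hFinv_lt := Finv_ab_mul_lt_h1 (hF.of_leftInverse hFinv₁) (hρ.differentiable one_ne_zero)
    hlt hx₀pos
  have hK : ab τ ρ x₀ * x₀ < X₀ - (N : ℝ) * (x₀ * (1 - ab τ ρ x₀)) := by
    simpa only [← hx₀, hFinv₁] using hF hFinv_lt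
  linarith

/-- Positivity of the final order in Version 1: if `x₀ > 0` solves
`F⁻¹(X₀ − Nx₀(1 − ā(x₀))) = h₁(x₀)`, then
`x_N = X₀ − x₀ − (N−1)x₀(1 − ā(x₀)) > 0`. -/
theorem final_order_positive_v1
    (f Finv : ℝ → ℝ) (hf : Continuous f) (hfpos : ∀ x, 0 < f x)
    (htop : Tendsto (Fi f) atTop atTop) (hbot : Tendsto (Fi f) atBot atBot)
    (hFinv₁ : ∀ x, Fi f (Finv x) = x) (hFinv₂ : ∀ x, Finv (Fi f x) = x)
    (τ : ℝ) (hτ : 0 < τ) (ρ : ℝ → ℝ) (hρ : ContDiff ℝ 1 ρ)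
    (hρ' : ∀ x, 0 < 1 - τ * deriv ρ x * x)
    (hlt : ∀ x, ab τ ρ x * (1 - τ * deriv ρ x * x) < 1)
    (N : ℕ) (hN : 1 ≤ N) (X₀ : ℝ) (hX₀ : 0 < X₀)
    (x₀ : ℝ) (hx₀pos : 0 < x₀)
    (hx₀ : Finv (X₀ - (N : ℝ) * (x₀ * (1 - ab τ ρ x₀))) = h1 Finv τ ρ x₀) :
    0 < X₀ - x₀ - ((N : ℝ) - 1) * (x₀ * (1 - ab τ ρ x₀)) :=
  final_order_positive_v1_general f Finv hf hfpos hFinv₁ τ ρ hρ hlt N X₀ x₀ hx₀pos hx₀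
end
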